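/- arXiv:math/0205259 — 2 statements merged into one kernel-verified Lean document; each statement's English description precedes it below -/
import Mathlib

section
/- Let ρ : G → ℂ be continuous and dν(x) = ρ(x)dx where dx is left Haar measure on G. Then ν satisfies ∫_G f(k⁻¹xh⁻¹) dν(x) = Δ_K(k)Δ_H(h) ∫_G f dν for all k ∈ K, h ∈ H, f ∈ C_c(G) if and only if ρ(kxh) = ρ(x) Δ_K(k)Δ_H(h)/Δ_G(h) for all k ∈ K, h ∈ H, x ∈ G. -/
/-!
Left translation by `k` leaves the Haar integral unchanged, while right translation by `h`
multiplies it by `Δ_G(h)`; hence `∫ f(k⁻¹xh⁻¹) ρ(x) dx = Δ_G(h) ∫ f(x) ρ(kxh) dx`. The invariance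
condition therefore says that the continuous functions `x ↦ ρ(kxh)` and
`x ↦ ρ(x) Δ_K(k)Δ_H(h)/Δ_G(h)` have the same integral against every `f ∈ C_c(G)`, and a continuous
function is determined by these integrals since Haar measure charges every open set.
-/

open MeasureTheory Topology

noncomputable section

/-- `Δ` is the modular function of the measure `μ`:
`∫ f(x k₀) dμ(x) = Δ(k₀)⁻¹ ∫ f dμ` for all `f ∈ C_c`. -/
def IsModularFunction {X : Type*} [Group X] [TopologicalSpace X] [MeasurableSpace X]
    (μ : Measure X) (Δ : X → ℝ) : Prop :=
  ∀ x₀ : X, ∀ f : X → ℝ, Continuous f → HasCompactSupport f →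
    ∫ x, f (x * x₀) ∂μ = (Δ x₀)⁻¹ * ∫ x, f x ∂μ

namespace IsModularFunction

variable {X : Type*} [Group X] [TopologicalSpace X] [ContinuousMul X] [MeasurableSpace X]
  [OpensMeasurableSpace X] {μ : Measure X} [IsFiniteMeasureOnCompacts μ] {Δ : X → ℝ}

theorem ne_zero [RegularSpace X] [LocallyCompactSpace X] [μ.IsOpenPosMeasure]
    (hΔ : IsModularFunction μ Δ) (x₀ : X) : Δ x₀ ≠ 0 := by
  obtain ⟨φ, hφc, hφ_nonneg, hφ1⟩ := exists_continuous_nonneg_pos (1 : X)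
  have hpos : 0 < ∫ x, φ x ∂μ :=
    φ.continuous.integral_pos_of_hasCompactSupport_nonneg_nonzero hφc hφ_nonneg hφ1
  have htranslate := hΔ x₀ (fun x => φ (x * x₀⁻¹)) (φ.continuous.comp (continuous_mul_const _))
    (hφc.comp_homeomorph (Homeomorph.mulRight x₀⁻¹))
  simp only [mul_inv_cancel_right] at htranslate
  intro hzero
  rw [htranslate, hzero, inv_zero, zero_mul] at hpos
  exact lt_irrefl 0 hpos

theorem integral_comp_mul_right_complex (hΔ : IsModularFunction μ Δ) (x₀ : X) {f : X → ℂ}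
    (hf : Continuous f) (hfc : HasCompactSupport f) :
    ∫ x, f (x * x₀) ∂μ = (Δ x₀ : ℂ)⁻¹ * ∫ x, f x ∂μ := by
  have hint : Integrable f μ := hf.integrable_of_hasCompactSupport hfc
  have hint' : Integrable (fun x => f (x * x₀)) μ :=
    (hf.comp (continuous_mul_const x₀)).integrable_of_hasCompactSupport
      (hfc.comp_homeomorph (Homeomorph.mulRight x₀))
  have hre := hΔ x₀ (fun x => (f x).re) (Complex.continuous_re.comp hf) (hfc.comp_left rfl)
  have him := hΔ x₀ (fun x => (f x).im) (Complex.continuous_im.comp hf) (hfc.comp_left rfl)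
  rw [← Complex.ofReal_inv]
  apply Complex.ext
  · rw [Complex.re_ofReal_mul]
    have hre_int := integral_re hint
    have hre_int' := integral_re hint'
    simp only [RCLike.re_to_complex] at hre_int hre_int'
    rw [← hre_int, ← hre_int', hre]
  · rw [Complex.im_ofReal_mul]
    have him_int := integral_im hint
    have him_int' := integral_im hint'
    simp only [RCLike.im_to_complex] at him_int him_int'
    rw [← him_int, ← him_int', him]

theorem integral_comp_mul_inv_complex [RegularSpace X] [LocallyCompactSpace X]
    [μ.IsOpenPosMeasure] (hΔ : IsModularFunction μ Δ) (x₀ : X) {f : X → ℂ}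
    (hf : Continuous f) (hfc : HasCompactSupport f) :
    ∫ x, f (x * x₀⁻¹) ∂μ = (Δ x₀ : ℂ) * ∫ x, f x ∂μ := by
  have hΔ0 : (Δ x₀ : ℂ) ≠ 0 := Complex.ofReal_ne_zero.mpr (hΔ.ne_zero x₀)
  have h := hΔ.integral_comp_mul_right_complex x₀ (hf.comp (continuous_mul_const x₀⁻¹))
    (hfc.comp_homeomorph (Homeomorph.mulRight x₀⁻¹))
  simp only [Function.comp_apply, mul_inv_cancel_right] at h
  rw [h, mul_inv_cancel_left₀ hΔ0]

end IsModularFunction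

section

variable {X : Type*} [TopologicalSpace X] [RegularSpace X] [LocallyCompactSpace X]
  [MeasurableSpace X] [OpensMeasurableSpace X] (μ : Measure X) [IsFiniteMeasureOnCompacts μ]
  [μ.IsOpenPosMeasure]

theorem Continuous.eq_zero_of_forall_integral_mul_eq_zero {g : X → ℂ} (hg : Continuous g)
    (hint : ∀ f : X → ℂ, Continuous f → HasCompactSupport f → ∫ x, f x * g x ∂μ = 0) :
    g = 0 := by
  ext x₀
  by_contra hgx₀
  obtain ⟨φ, hφc, hφ_nonneg, hφx₀⟩ := exists_continuous_nonneg_pos x₀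
  -- test against `φ · conj g`, which turns the integrand into `φ |g|² ≥ 0`
  have hcont : Continuous fun x => φ x * Complex.normSq (g x) :=
    φ.continuous.mul (Complex.continuous_normSq.comp hg)
  have hpos : 0 < ∫ x, φ x * Complex.normSq (g x) ∂μ :=
    hcont.integral_pos_of_hasCompactSupport_nonneg_nonzero hφc.mul_right
      (fun x => mul_nonneg (hφ_nonneg x) (Complex.normSq_nonneg _))
      (mul_ne_zero hφx₀ (Complex.normSq_pos.mpr hgx₀).ne')
  have hzero := hint (fun x => φ x * starRingEnd ℂ (g x))
    ((Complex.continuous_ofReal.comp φ.continuous).mul (Complex.continuous_conj.comp hg))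
    (hφc.comp_left Complex.ofReal_zero).mul_right
  simp_rw [mul_assoc, ← Complex.normSq_eq_conj_mul_self, ← Complex.ofReal_mul,
    integral_complex_ofReal] at hzero
  exact hpos.ne' (Complex.ofReal_eq_zero.mp hzero)

theorem Continuous.eq_of_forall_integral_mul_eq {g₁ g₂ : X → ℂ} (hg₁ : Continuous g₁)
    (hg₂ : Continuous g₂)
    (hint : ∀ f : X → ℂ, Continuous f → HasCompactSupport f →
      ∫ x, f x * g₁ x ∂μ = ∫ x, f x * g₂ x ∂μ) :
    g₁ = g₂ := by
  refine sub_eq_zero.mp ((hg₁.sub hg₂).eq_zero_of_forall_integral_mul_eq_zero μ fun f hf hfc => ?_)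
  have hint₁ : Integrable (fun x => f x * g₁ x) μ :=
    (hf.mul hg₁).integrable_of_hasCompactSupport hfc.mul_right
  have hint₂ : Integrable (fun x => f x * g₂ x) μ :=
    (hf.mul hg₂).integrable_of_hasCompactSupport hfc.mul_right
  simp only [Pi.sub_apply, mul_sub]
  rw [integral_sub hint₁ hint₂, hint f hf hfc, sub_self]

end

theorem IsModularFunction.integral_comp_inv_mul_mul_inv {G : Type*} [Group G] [TopologicalSpace G]
    [IsTopologicalGroup G] [LocallyCompactSpace G] [MeasurableSpace G] [BorelSpace G]
    {μ : Measure G} [μ.IsHaarMeasure] {Δ : G → ℝ} (hΔ : IsModularFunction μ Δ)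
    {ρ : G → ℂ} (hρ : Continuous ρ) (k h : G) {f : G → ℂ} (hf : Continuous f)
    (hfc : HasCompactSupport f) :
    ∫ x, f (k⁻¹ * x * h⁻¹) * ρ x ∂μ = (Δ h : ℂ) * ∫ x, f x * ρ (k * x * h) ∂μ := by
  have hleft : ∫ x, f (k⁻¹ * x * h⁻¹) * ρ x ∂μ = ∫ x, f (x * h⁻¹) * ρ (k * x) ∂μ := by
    rw [← integral_mul_left_eq_self _ k]
    simp only [inv_mul_cancel_left]
  have hright := hΔ.integral_comp_mul_inv_complex h (f := fun x => f x * ρ (k * x * h))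
    (by fun_prop) hfc.mul_right
  simp only [inv_mul_cancel_right, ← mul_assoc] at hright
  rw [hleft, ← hright]

theorem bruhat_function_iff_general
    {G : Type*} [Group G] [TopologicalSpace G] [IsTopologicalGroup G] [LocallyCompactSpace G]
    [MeasurableSpace G] [BorelSpace G]
    (K H : Subgroup G)
    (μG : Measure G) [μG.IsHaarMeasure]
    (ΔG : G → ℝ) (hΔG : IsModularFunction μG ΔG)
    (ΔK : K → ℝ)
    (ΔH : H → ℝ)
    (ρ : G → ℂ) (hρ : Continuous ρ) :
    (∀ (k : K) (h : H) (f : G → ℂ), Continuous f → HasCompactSupport f →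
        ∫ x, f ((k : G)⁻¹ * x * (h : G)⁻¹) * ρ x ∂μG
          = (ΔK k : ℂ) * (ΔH h : ℂ) * ∫ x, f x * ρ x ∂μG)
      ↔ (∀ (k : K) (h : H) (x : G),
          ρ ((k : G) * x * (h : G)) = ρ x * ((ΔK k * ΔH h / ΔG (h : G) : ℝ) : ℂ)) := by
  have hΔG0 (h : H) : (ΔG h : ℂ) ≠ 0 := Complex.ofReal_ne_zero.mpr (hΔG.ne_zero h)
  have hfactor (k : K) (h : H) :
      (ΔG h : ℂ) * ((ΔK k * ΔH h / ΔG h : ℝ) : ℂ) = ΔK k * ΔH h := by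
    push_cast
    exact mul_div_cancel₀ _ (hΔG0 h)
  have hρ_const (c : ℂ) (f : G → ℂ) :
      ∫ x, f x * (ρ x * c) ∂μG = (∫ x, f x * ρ x ∂μG) * c := by
    simp only [← mul_assoc, integral_mul_const]
  constructor
  · intro hinv k h
    have hρ_translate : Continuous fun x => ρ ((k : G) * x * h) := by fun_prop
    refine funext_iff.mp (hρ_translate.eq_of_forall_integral_mul_eq μG (hρ.mul continuous_const)
      fun f hf hfc => mul_left_cancel₀ (hΔG0 h) ?_)
    rw [← hΔG.integral_comp_inv_mul_mul_inv hρ _ _ hf hfc, hinv k h f hf hfc, hρ_const]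
    linear_combination -(∫ x, f x * ρ x ∂μG) * hfactor k h
  · intro hρ_eq k h f hf hfc
    simp only [hΔG.integral_comp_inv_mul_mul_inv hρ _ _ hf hfc, hρ_eq, hρ_const]
    linear_combination (∫ x, f x * ρ x ∂μG) * hfactor k h

/-- A continuous `ρ : G → ℂ` makes `dν = ρ dx` satisfy the relative invariance condition
`∫ f(k⁻¹xh⁻¹) dν = Δ_K(k)Δ_H(h) ∫ f dν` iff `ρ(kxh) = ρ(x)Δ_K(k)Δ_H(h)/Δ_G(h)`
(generalized Bruhat function). -/
theorem bruhat_function_iff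
    {G : Type*} [Group G] [TopologicalSpace G] [IsTopologicalGroup G] [LocallyCompactSpace G]
    [MeasurableSpace G] [BorelSpace G]
    (K H : Subgroup G) (hK : IsClosed (K : Set G)) (hH : IsClosed (H : Set G))
    (μG : Measure G) [μG.IsHaarMeasure]
    (νK : Measure K) [νK.IsHaarMeasure] (νH : Measure H) [νH.IsHaarMeasure]
    (ΔG : G → ℝ) (hΔG : IsModularFunction μG ΔG)
    (ΔK : K → ℝ) (hΔK : IsModularFunction νK ΔK)
    (ΔH : H → ℝ) (hΔH : IsModularFunction νH ΔH)
    (ρ : G → ℂ) (hρ : Continuous ρ) :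
    (∀ (k : K) (h : H) (f : G → ℂ), Continuous f → HasCompactSupport f →
        ∫ x, f ((k : G)⁻¹ * x * (h : G)⁻¹) * ρ x ∂μG
          = (ΔK k : ℂ) * (ΔH h : ℂ) * ∫ x, f x * ρ x ∂μG)
      ↔ (∀ (k : K) (h : H) (x : G),
          ρ ((k : G) * x * (h : G)) = ρ x * ((ΔK k * ΔH h / ΔG (h : G) : ℝ) : ℂ)) :=
  bruhat_function_iff_general K H μG ΔG hΔG ΔK ΔH ρ hρ
end
end

section
/- If K and H are compact subgroups of a locally compact group G, then there exists a G-invariant Radon measure on the double coset space K\G/H. -/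
open MeasureTheory Topology
open scoped ENNReal

noncomputable section

instance dosetTopology {G : Type*} [Group G] [TopologicalSpace G] (A B : Set G) :
    TopologicalSpace (DoubleCoset.Quotient A B) :=
  inferInstanceAs (TopologicalSpace (Quotient (DoubleCoset.setoid A B)))

instance dosetMeasurableSpace {G : Type*} [Group G] [MeasurableSpace G] (A B : Set G) :
    MeasurableSpace (DoubleCoset.Quotient A B) :=
  inferInstanceAs (MeasurableSpace (Quotient (DoubleCoset.setoid A B)))

section

variable {G : Type*} [Group G] [TopologicalSpace G] [IsTopologicalGroup G] [LocallyCompactSpace G]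
  [MeasurableSpace G] [BorelSpace G] (K H : Subgroup G)

/-- The average of `f ∈ C_c(G)` over the double coset of the representative of `d`,
i.e. `Qf(ẋ) = ∫_K ∫_H f(kxh) dk dh`. -/
def avg (νK : Measure K) (νH : Measure H) (f : G → ℝ)
    (d : DoubleCoset.Quotient (K : Set G) (H : Set G)) : ℝ :=
  ∫ k : K, ∫ h : H, f ((k : G) * d.out * (h : G)) ∂νH ∂νK

/-- `μ` is a `G`-invariant measure on `K\G/H`: the positive linear functional
`f ↦ ∫_{K\G/H} Qf dμ` on `C_c(G)` is invariant under left translations by `G`. -/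
def IsGInvariant (νK : Measure K) (νH : Measure H)
    (μ : Measure (DoubleCoset.Quotient (K : Set G) (H : Set G))) : Prop :=
  ∀ g : G, ∀ f : G → ℝ, Continuous f → HasCompactSupport f →
    ∫ d, avg K H νK νH (fun x => f (g * x)) d ∂μ = ∫ d, avg K H νK νH f d ∂μ

open scoped Pointwise

/-!
The measure is the push-forward `q_* μ` of a left Haar measure `μ` of `G` along the projection
`q : G → K\G/H`. As `K` and `H` are compact, `q` is a proper map (`q⁻¹(q F) = K F H` is closed for
closed `F`, and the fibres `K x H` are compact), and push-forwards of Radon measures along proper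
maps are Radon. For invariance, `Qf ∘ q = x ↦ ∫_K ∫_H f(kxh)` because the Haar probability of the
compact group `K` is also right invariant; Fubini and left invariance of `μ` then give
`∫ Qf d(q_* μ) = ∫_H ∫_G f(xh) dμ(x) dh`, which does not change under `f ↦ f(g ·)`.
-/

section ClosedMap

variable {X Y : Type*} [TopologicalSpace X] [MeasurableSpace X] [TopologicalSpace Y]
  [MeasurableSpace Y] [OpensMeasurableSpace Y] {μ : Measure X} {f : X → Y}

/-- An open `V ⊇ f ⁻¹' s` shrinks to the saturated open set `f ⁻¹' (f '' Vᶜ)ᶜ`. -/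
lemma IsClosedMap.exists_isOpen_superset_map_lt [μ.OuterRegular] (hf : IsClosedMap f)
    (hfm : Measurable f) {s : Set Y} {r : ℝ≥0∞} (hr : μ (f ⁻¹' s) < r) :
    ∃ U ⊇ s, IsOpen U ∧ μ.map f U < r := by
  obtain ⟨V, hsV, hV, hVr⟩ := Set.exists_isOpen_lt_of_lt _ r hr
  have hU : IsOpen (f '' Vᶜ)ᶜ := (hf _ hV.isClosed_compl).isOpen_compl
  refine ⟨(f '' Vᶜ)ᶜ, fun y hy ⟨x, hxV, hxy⟩ => hxV (hsV (by rwa [Set.mem_preimage, hxy])), hU, ?_⟩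
  rw [Measure.map_apply hfm hU.measurableSet]
  refine (measure_mono fun x hx => ?_).trans_lt hVr
  by_contra hxV
  exact hx ⟨x, hxV, rfl⟩

lemma MeasureTheory.Measure.OuterRegular.map_of_isClosedMap [μ.OuterRegular]
    (hf : IsClosedMap f) (hfm : Measurable f) : (μ.map f).OuterRegular :=
  ⟨fun A hA _ hr => hf.exists_isOpen_superset_map_lt hfm (by rwa [Measure.map_apply hfm hA] at hr)⟩

lemma MeasureTheory.IsFiniteMeasureOnCompacts.map_of_isProperMap [μ.OuterRegular]
    [IsFiniteMeasureOnCompacts μ] (hf : IsProperMap f) (hfm : Measurable f) :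
    IsFiniteMeasureOnCompacts (μ.map f) := by
  refine ⟨fun s hs => ?_⟩
  obtain ⟨U, hsU, -, hU⟩ := hf.isClosedMap.exists_isOpen_superset_map_lt hfm
    ((hf.isCompact_preimage hs).measure_lt_top (μ := μ))
  exact (measure_mono hsU).trans_lt hU

lemma MeasureTheory.Measure.Regular.map_of_isProperMap [μ.Regular] (hf : IsProperMap f)
    (hfm : Measurable f) : (μ.map f).Regular where
  toIsFiniteMeasureOnCompacts := .map_of_isProperMap hf hfm
  toOuterRegular := .map_of_isClosedMap hf.isClosedMap hfm
  innerRegular := Measure.Regular.innerRegular.map hfm.aemeasurable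
    (fun _ hU => hU.preimage hf.continuous) (fun _ hK => hK.image hf.continuous)
    (fun _ hU => hU.measurableSet)

end ClosedMap

section CompactSpace

variable {X Y E : Type*} [TopologicalSpace X] [TopologicalSpace Y] [CompactSpace Y]

lemma continuous_integral_of_compactSpace [MeasurableSpace Y] [OpensMeasurableSpace Y]
    [NormedAddCommGroup E] [NormedSpace ℝ E] {μ : Measure Y} [IsFiniteMeasureOnCompacts μ]
    {f : X → Y → E} (hf : Continuous (Function.uncurry f)) :
    Continuous fun x => ∫ y, f x y ∂μ :=
  continuousOn_univ.mp <| continuousOn_integral_of_compact_support (μ := μ) isCompact_univ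
    hf.continuousOn fun _ _ _ hy => absurd (Set.mem_univ _) hy

lemma hasCompactSupport_uncurry_of_compactSpace [R1Space X] [R1Space Y] [Zero E] {f : X → Y → E}
    {T : Set X} (hT : IsCompact T) (hf : ∀ x ∉ T, ∀ y, f x y = 0) :
    HasCompactSupport (Function.uncurry f) :=
  .intro (hT.prod isCompact_univ) fun p hp => hf p.1 (fun hpT => hp ⟨hpT, Set.mem_univ _⟩) p.2

lemma MeasureTheory.Measure.isMulRightInvariant_of_isProbabilityMeasure [Group Y]
    [IsTopologicalGroup Y] [MeasurableSpace Y] [BorelSpace Y] (ν : Measure Y) [ν.IsHaarMeasure]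
    [IsProbabilityMeasure ν] : ν.IsMulRightInvariant := by
  refine ⟨fun g => ?_⟩
  have : IsProbabilityMeasure (ν.map (· * g)) :=
    isProbabilityMeasure_map (measurable_mul_const g).aemeasurable
  exact isHaarMeasure_eq_of_isProbabilityMeasure _ _

end CompactSpace

namespace DoubleCoset

variable {G : Type*} [Group G] {K H : Subgroup G}

lemma preimage_image_mk (K H : Subgroup G) (S : Set G) :
    mk K H ⁻¹' (mk K H '' S) = (K : Set G) * S * H := by
  ext x
  simp only [Set.mem_preimage, Set.mem_image, eq]
  constructor
  · rintro ⟨s, hs, k, hk, h, hh, rfl⟩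
    exact Set.mul_mem_mul (Set.mul_mem_mul hk hs) hh
  · rintro ⟨_, ⟨k, hk, s, hs, rfl⟩, h, hh, rfl⟩
    exact ⟨s, hs, k, hk, h, hh, rfl⟩

lemma mem_mul_mul_of_mul_mul_mem {S : Set G} {k x h : G} (hk : k ∈ K) (hh : h ∈ H)
    (hS : k * x * h ∈ S) : x ∈ (K : Set G) * S * H := by
  have hx : x = k⁻¹ * (k * x * h) * h⁻¹ := by group
  rw [hx]
  exact Set.mul_mem_mul (Set.mul_mem_mul (K.inv_mem hk) hS) (H.inv_mem hh)

variable [TopologicalSpace G]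

instance opensMeasurableSpace [MeasurableSpace G] [OpensMeasurableSpace G] (A B : Set G) :
    OpensMeasurableSpace (Quotient A B) :=
  ⟨MeasurableSpace.generateFrom_le fun _ hU =>
    measurableSet_quotient.mpr (hU.preimage continuous_quot_mk).measurableSet⟩

lemma isQuotientMap_mk (K H : Subgroup G) : IsQuotientMap (mk K H) :=
  isQuotientMap_quot_mk

variable [IsTopologicalGroup G]

lemma isClosedMap_mk (hK : IsCompact (K : Set G)) (hH : IsCompact (H : Set G)) :
    IsClosedMap (mk K H) := fun F hF => by
  rw [← (isQuotientMap_mk K H).isClosed_preimage, preimage_image_mk]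
  exact (hF.mul_left_of_isCompact hK).mul_right_of_isCompact hH

lemma isProperMap_mk (hK : IsCompact (K : Set G)) (hH : IsCompact (H : Set G)) :
    IsProperMap (mk K H) := by
  refine isProperMap_iff_isClosedMap_and_compact_fibers.mpr
    ⟨(isQuotientMap_mk K H).continuous, isClosedMap_mk hK hH, fun d => ?_⟩
  rw [← out_eq' K H d, ← Set.image_singleton, preimage_image_mk]
  exact (hK.mul isCompact_singleton).mul hH

end DoubleCoset

section Averaging

variable {G : Type*} [Group G] [TopologicalSpace G] [IsTopologicalGroup G] [MeasurableSpace G]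
  [BorelSpace G] {K H : Subgroup G} (νK : Measure K) (νH : Measure H) {f : G → ℝ}

lemma continuous_integral_integral_mul_mul [CompactSpace H] [IsFiniteMeasureOnCompacts νH]
    (hf : Continuous f) : Continuous (Function.uncurry fun x (k : K) => ∫ h, f (k * x * h) ∂νH) :=
  continuous_integral_of_compactSpace (f := fun (p : G × K) (h : H) => f (p.2 * p.1 * h))
    (by fun_prop)

lemma integral_integral_integral_mul_mul_swap [CompactSpace K] [CompactSpace H]
    [IsFiniteMeasureOnCompacts νK] [IsFiniteMeasureOnCompacts νH] (μ : Measure G)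
    [IsFiniteMeasureOnCompacts μ] (hf : Continuous f) (hfc : HasCompactSupport f) :
    ∫ x, ∫ k, ∫ h, f (k * x * h) ∂νH ∂νK ∂μ = ∫ k, ∫ h, ∫ x, f (k * x * h) ∂μ ∂νH ∂νK := by
  have hT : IsCompact ((K : Set G) * tsupport f * (H : Set G)) :=
    ((isCompact_iff_compactSpace.mpr ‹_›).mul hfc).mul (isCompact_iff_compactSpace.mpr ‹_›)
  have hvanish : ∀ x ∉ (K : Set G) * tsupport f * (H : Set G), ∀ (k : K) (h : H),
      f (k * x * h) = 0 := fun x hx k h => by_contra fun hne =>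
    hx (DoubleCoset.mem_mul_mul_of_mul_mul_mem k.2 h.2 (subset_tsupport f hne))
  rw [integral_integral_swap_of_hasCompactSupport (continuous_integral_integral_mul_mul νH hf)
    (hasCompactSupport_uncurry_of_compactSpace hT fun x hx k =>
      integral_eq_zero_of_ae (ae_of_all _ (hvanish x hx k)))]
  refine integral_congr_ae (ae_of_all _ fun k => ?_)
  exact integral_integral_swap_of_hasCompactSupport (by fun_prop)
    (hasCompactSupport_uncurry_of_compactSpace hT fun x hx => hvanish x hx k)

variable [νK.IsMulRightInvariant] [νH.IsMulLeftInvariant]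

lemma integral_integral_mul_mul_of_mem (f : G → ℝ) (x : G) {k₀ h₀ : G} (hk₀ : k₀ ∈ K)
    (hh₀ : h₀ ∈ H) :
    ∫ k, ∫ h, f (k * (k₀ * x * h₀) * h) ∂νH ∂νK = ∫ k, ∫ h, f (k * x * h) ∂νH ∂νK := by
  have hmul : ∀ (k : K) (h : H), (k : G) * (k₀ * x * h₀) * h =
      ((k * ⟨k₀, hk₀⟩ : K) : G) * x * ((⟨h₀, hh₀⟩ * h : H) : G) := fun k h => by
    simp only [Subgroup.coe_mul, mul_assoc]
  simp_rw [hmul]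
  refine (integral_congr_ae <| ae_of_all _ fun k => integral_mul_left_eq_self
    (fun h : H => f (((k * ⟨k₀, hk₀⟩ : K) : G) * x * h)) (⟨h₀, hh₀⟩ : H)).trans ?_
  exact integral_mul_right_eq_self (fun k : K => ∫ h, f (k * x * h) ∂νH) (⟨k₀, hk₀⟩ : K)

lemma avg_mk (f : G → ℝ) (x : G) :
    avg K H νK νH f (DoubleCoset.mk K H x) = ∫ k, ∫ h, f (k * x * h) ∂νH ∂νK := by
  obtain ⟨k₀, h₀, hk₀, hh₀, hout⟩ := DoubleCoset.mk_out_eq_mul K H x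
  rw [avg, hout]
  exact integral_integral_mul_mul_of_mem νK νH f x hk₀ hh₀

variable [CompactSpace K] [CompactSpace H] [IsProbabilityMeasure νK] [IsFiniteMeasureOnCompacts νH]
  (μ : Measure G) [IsFiniteMeasureOnCompacts μ] [μ.IsMulLeftInvariant]

lemma integral_avg_map_mk (hf : Continuous f) (hfc : HasCompactSupport f) :
    ∫ d, avg K H νK νH f d ∂(μ.map (DoubleCoset.mk K H)) = ∫ h, ∫ x, f (x * h) ∂μ ∂νH := by
  have hmk : Measurable (DoubleCoset.mk K H) := measurable_quotient_mk''
  have havg : Measurable (avg K H νK νH f) := by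
    refine measurable_from_quotient.mpr ?_
    convert (continuous_integral_of_compactSpace (μ := νK)
      (continuous_integral_integral_mul_mul νH hf)).measurable using 1
    exact funext (avg_mk νK νH f)
  calc ∫ d, avg K H νK νH f d ∂(μ.map (DoubleCoset.mk K H))
      = ∫ x, ∫ k, ∫ h, f (k * x * h) ∂νH ∂νK ∂μ := by
        rw [integral_map hmk.aemeasurable havg.aestronglyMeasurable]
        simp only [avg_mk]
    _ = ∫ k, ∫ h, ∫ x, f (k * x * h) ∂μ ∂νH ∂νK :=
        integral_integral_integral_mul_mul_swap νK νH μ hf hfc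
    _ = ∫ _ : K, ∫ h, ∫ x, f (x * h) ∂μ ∂νH ∂νK := by
        congr 1 with k
        congr 1 with h
        exact integral_mul_left_eq_self (fun y => f (y * h)) (k : G)
    _ = ∫ h, ∫ x, f (x * h) ∂μ ∂νH := by simp

lemma isGInvariant_map_mk : IsGInvariant K H νK νH (μ.map (DoubleCoset.mk K H)) := by
  intro g f hf hfc
  rw [integral_avg_map_mk νK νH μ (f := fun x => f (g * x)) (hf.comp (continuous_const_mul g))
    (hfc.comp_homeomorph (Homeomorph.mulLeft g)), integral_avg_map_mk νK νH μ hf hfc]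
  congr 1 with h
  simpa only [mul_assoc] using integral_mul_left_eq_self (fun y => f (y * h)) g

end Averaging

theorem exists_invariant_measure_of_compact
    (hK : IsCompact (K : Set G)) (hH : IsCompact (H : Set G))
    (νK : Measure K) [νK.IsHaarMeasure] [IsProbabilityMeasure νK]
    (νH : Measure H) [νH.IsHaarMeasure] :
    ∃ μ : Measure (DoubleCoset.Quotient (K : Set G) (H : Set G)),
      μ.Regular ∧ μ ≠ 0 ∧ IsGInvariant K H νK νH μ := by
  have : CompactSpace K := isCompact_iff_compactSpace.mp hK
  have : CompactSpace H := isCompact_iff_compactSpace.mp hH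
  have := νK.isMulRightInvariant_of_isProbabilityMeasure
  have hmk : Measurable (DoubleCoset.mk K H) := measurable_quotient_mk''
  exact ⟨(Measure.haar : Measure G).map (DoubleCoset.mk K H),
    .map_of_isProperMap (DoubleCoset.isProperMap_mk hK hH) hmk,
    (Measure.map_ne_zero_iff hmk.aemeasurable).mpr (NeZero.ne _), isGInvariant_map_mk νK νH _⟩

end
end
end
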